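/- For every separable bipartite quantum channel E from A₀B₀ to A₁B₁ with all four systems of dimension K, the overlap of normalized Choi matrices satisfies tr(J^{F^K} J^E) ≤ 1/K², where F^K is the K-swap channel. -/

import Mathlib

open scoped BigOperators Kronecker ComplexOrder
open Matrix Filter

noncomputable section

namespace DynEnt

/-- A (not necessarily linear) map between matrix spaces. -/
abbrev MatMap (ι₀ ι₁ : Type) : Type := Matrix ι₀ ι₀ ℂ → Matrix ι₁ ι₁ ℂ

/-- The map `L ⊗ id_ρ`, acting trivially on a reference system indexed by `ρ`. -/
def tensorIdT {ι₀ ι₁ ρ : Type} (L : MatMap ι₀ ι₁)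
    (X : Matrix (ι₀ × ρ) (ι₀ × ρ) ℂ) : Matrix (ι₁ × ρ) (ι₁ × ρ) ℂ :=
  Matrix.of fun p q => L (Matrix.of fun i j => X (i, p.2) (j, q.2)) p.1 q.1

def IsLinearFun {ι₀ ι₁ : Type} (L : MatMap ι₀ ι₁) : Prop :=
  ∀ (c : ℂ) (X Y : Matrix ι₀ ι₀ ℂ), L (c • X + Y) = c • L X + L Y

def IsCompletelyPositive {ι₀ ι₁ : Type} [Fintype ι₀] [Fintype ι₁] (L : MatMap ι₀ ι₁) : Prop :=
  ∀ (r : ℕ) (X : Matrix (ι₀ × Fin r) (ι₀ × Fin r) ℂ), X.PosSemidef → (tensorIdT L X).PosSemidef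

def IsTracePreserving {ι₀ ι₁ : Type} [Fintype ι₀] [Fintype ι₁] (L : MatMap ι₀ ι₁) : Prop :=
  ∀ X, (L X).trace = X.trace

/-- A quantum channel: a linear, completely positive, trace-preserving map. -/
def IsChannel {ι₀ ι₁ : Type} [Fintype ι₀] [Fintype ι₁] (L : MatMap ι₀ ι₁) : Prop :=
  IsLinearFun L ∧ IsCompletelyPositive L ∧ IsTracePreserving L

/-- Tensor product of two matrix maps, defined on matrix units and extended linearly. -/
def tensorMap {α₀ α₁ β₀ β₁ : Type} [Fintype α₀] [DecidableEq α₀] [Fintype β₀] [DecidableEq β₀]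
    (LA : MatMap α₀ α₁) (LB : MatMap β₀ β₁) : MatMap (α₀ × β₀) (α₁ × β₁) :=
  fun X => ∑ i : α₀, ∑ j : α₀, ∑ k : β₀, ∑ l : β₀,
    X (i, k) (j, l) • (LA (Matrix.single i j 1) ⊗ₖ LB (Matrix.single k l 1))

/-- Separable bipartite channel (cut `α : β`). -/
def IsSepChannel {α₀ β₀ α₁ β₁ : Type}
    [Fintype α₀] [DecidableEq α₀] [Fintype β₀] [DecidableEq β₀] [Fintype α₁] [Fintype β₁]
    (N : MatMap (α₀ × β₀) (α₁ × β₁)) : Prop :=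
  IsChannel N ∧ ∃ (n : ℕ) (LA : Fin n → MatMap α₀ α₁) (LB : Fin n → MatMap β₀ β₁),
    (∀ k, IsLinearFun (LA k) ∧ IsCompletelyPositive (LA k) ∧
          IsLinearFun (LB k) ∧ IsCompletelyPositive (LB k)) ∧
    ∀ X, N X = ∑ k, tensorMap (LA k) (LB k) X

/-- The former Mathlib `Matrix.PosSemidef.sqrt` (removed), with its old definition. -/
def posSemidefSqrt {ι : Type} [Fintype ι] [DecidableEq ι] {A : Matrix ι ι ℂ}
    (hA : A.PosSemidef) : Matrix ι ι ℂ :=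
  (hA.1.eigenvectorUnitary : Matrix ι ι ℂ) *
    Matrix.diagonal ((↑) ∘ Real.sqrt ∘ hA.1.eigenvalues) *
    (star hA.1.eigenvectorUnitary : Matrix ι ι ℂ)

/-- Trace norm `‖X‖₁ = tr √(X† X)`. -/
def traceNorm {ι : Type} [Fintype ι] [DecidableEq ι] (X : Matrix ι ι ℂ) : ℝ :=
  (posSemidefSqrt (Matrix.posSemidef_conjTranspose_mul_self X)).trace.re

/-- Density matrix. -/
def IsState {ι : Type} [Fintype ι] (ρ : Matrix ι ι ℂ) : Prop :=
  ρ.PosSemidef ∧ ρ.trace = 1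

/-- Pure state (rank-one density matrix). -/
def IsPureState {ι : Type} [Fintype ι] (ρ : Matrix ι ι ℂ) : Prop :=
  ∃ v : ι → ℂ, (∑ i, Complex.normSq (v i)) = 1 ∧
    ρ = Matrix.vecMulVec v (fun i => star (v i))

/-- Diamond norm. -/
def diamondNorm {ι₀ ι₁ : Type} [Fintype ι₀] [Fintype ι₁] [DecidableEq ι₁]
    (L : MatMap ι₀ ι₁) : ℝ :=
  sSup { t : ℝ | ∃ (r : ℕ) (ρ : Matrix (ι₀ × Fin r) (ι₀ × Fin r) ℂ),
    ρ.PosSemidef ∧ ρ.trace = 1 ∧ t = traceNorm (tensorIdT L ρ) }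

section Bipartite

variable {α₀ β₀ α₁ β₁ α₀' β₀' α₁' β₁' : Type}
variable [Fintype α₀] [DecidableEq α₀] [Fintype β₀] [DecidableEq β₀]
variable [Fintype α₁] [DecidableEq α₁] [Fintype β₁] [DecidableEq β₁]
variable [Fintype α₀'] [DecidableEq α₀'] [Fintype β₀'] [DecidableEq β₀']
variable [Fintype α₁'] [DecidableEq α₁'] [Fintype β₁'] [DecidableEq β₁']

/-- Standard robustness w.r.t. separable channels. -/
def stdRobustness (N : MatMap (α₀ × β₀) (α₁ × β₁)) : ℝ :=
  sInf { s : ℝ | 0 ≤ s ∧ ∃ M : MatMap (α₀ × β₀) (α₁ × β₁), IsSepChannel M ∧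
    IsSepChannel (fun X => (1 + s)⁻¹ • (N X + s • M X)) }

/-- Generalized robustness w.r.t. separable channels. -/
def genRobustness (N : MatMap (α₀ × β₀) (α₁ × β₁)) : ℝ :=
  sInf { s : ℝ | 0 ≤ s ∧ ∃ M : MatMap (α₀ × β₀) (α₁ × β₁), IsChannel M ∧
    IsSepChannel (fun X => (1 + s)⁻¹ • (N X + s • M X)) }

/-- Standard log-robustness. -/
def LRs (N : MatMap (α₀ × β₀) (α₁ × β₁)) : ℝ := Real.logb 2 (1 + stdRobustness N)

/-- Generalized log-robustness. -/
def LRgen (N : MatMap (α₀ × β₀) (α₁ × β₁)) : ℝ := Real.logb 2 (1 + genRobustness N)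

/-- Smooth standard log-robustness. -/
def smoothLRs (ε : ℝ) (N : MatMap (α₀ × β₀) (α₁ × β₁)) : ℝ :=
  sInf { t : ℝ | ∃ N' : MatMap (α₀ × β₀) (α₁ × β₁), IsChannel N' ∧
    (1/2) * diamondNorm (fun X => N' X - N X) ≤ ε ∧ t = LRs N' }

/-- Smooth generalized log-robustness. -/
def smoothLRgen (ε : ℝ) (N : MatMap (α₀ × β₀) (α₁ × β₁)) : ℝ :=
  sInf { t : ℝ | ∃ N' : MatMap (α₀ × β₀) (α₁ × β₁), IsChannel N' ∧
    (1/2) * diamondNorm (fun X => N' X - N X) ≤ ε ∧ t = LRgen N' }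

end Bipartite

/-- A superchannel, given by pre- and post-processing channels with a memory system `Fin e`. -/
structure Superchannel (α₀ β₀ α₁ β₁ α₀' β₀' α₁' β₁' : Type)
    [Fintype α₀] [Fintype β₀] [Fintype α₁] [Fintype β₁]
    [Fintype α₀'] [Fintype β₀'] [Fintype α₁'] [Fintype β₁'] : Type where
  e : ℕ
  pre : MatMap (α₀' × β₀') ((α₀ × β₀) × Fin e)
  post : MatMap ((α₁ × β₁) × Fin e) (α₁' × β₁')
  pre_channel : IsChannel pre
  post_channel : IsChannel post

section Super

variable {α₀ β₀ α₁ β₁ α₀' β₀' α₁' β₁' : Type}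
variable [Fintype α₀] [DecidableEq α₀] [Fintype β₀] [DecidableEq β₀]
variable [Fintype α₁] [DecidableEq α₁] [Fintype β₁] [DecidableEq β₁]
variable [Fintype α₀'] [DecidableEq α₀'] [Fintype β₀'] [DecidableEq β₀']
variable [Fintype α₁'] [DecidableEq α₁'] [Fintype β₁'] [DecidableEq β₁']

/-- Action of a superchannel on a channel: `Θ[E] = post ∘ (E ⊗ id) ∘ pre`. -/
def Superchannel.apply (Θ : Superchannel α₀ β₀ α₁ β₁ α₀' β₀' α₁' β₁')
    (E : MatMap (α₀ × β₀) (α₁ × β₁)) : MatMap (α₀' × β₀') (α₁' × β₁') :=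
  fun X => Θ.post (tensorIdT E (Θ.pre X))

/-- Separability-preserving superchannel. -/
def IsSEPPSC (Θ : Superchannel α₀ β₀ α₁ β₁ α₀' β₀' α₁' β₁') : Prop :=
  ∀ M : MatMap (α₀ × β₀) (α₁ × β₁), IsSepChannel M → IsSepChannel (Θ.apply M)

/-- δ-separability-preserving superchannel. -/
def IsDeltaSEPPSC (δ : ℝ) (Θ : Superchannel α₀ β₀ α₁ β₁ α₀' β₀' α₁' β₁') : Prop :=
  ∀ M : MatMap (α₀ × β₀) (α₁ × β₁), IsSepChannel M → genRobustness (Θ.apply M) ≤ δ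

end Super

/-- The swap unitary `F = Σ |ij⟩⟨ji|` on `ℂ^K ⊗ ℂ^K`. -/
def swapMatrix (K : ℕ) : Matrix (Fin K × Fin K) (Fin K × Fin K) ℂ :=
  Matrix.of fun p q => if p.1 = q.2 ∧ p.2 = q.1 then 1 else 0

/-- The `K`-swap channel `X ↦ F X F†`. -/
def swapChannel (K : ℕ) : MatMap (Fin K × Fin K) (Fin K × Fin K) :=
  fun X => swapMatrix K * X * (swapMatrix K)ᴴ

/-- The density matrix of the `K`-maximally entangled state inside `ℂ^{dA} ⊗ ℂ^{dB}`. -/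
def maxEntangled (dA dB K : ℕ) : Matrix (Fin dA × Fin dB) (Fin dA × Fin dB) ℂ :=
  Matrix.of fun p q =>
    if (p.1 : ℕ) = (p.2 : ℕ) ∧ (q.1 : ℕ) = (q.2 : ℕ) ∧ (p.1 : ℕ) < K ∧ (q.1 : ℕ) < K
    then (1 / K : ℂ) else 0

/-- Separable bipartite state. -/
def IsSepState {ιA ιB : Type} [Fintype ιA] [Fintype ιB]
    (σ : Matrix (ιA × ιB) (ιA × ιB) ℂ) : Prop :=
  ∃ (n : ℕ) (p : Fin n → ℝ) (φ : Fin n → ιA → ℂ) (ψ : Fin n → ιB → ℂ),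
    (∀ a, 0 ≤ p a) ∧ (∑ a, p a) = 1 ∧
    (∀ a, (∑ i, Complex.normSq (φ a i)) = 1) ∧
    (∀ a, (∑ i, Complex.normSq (ψ a i)) = 1) ∧
    σ = ∑ a, (p a : ℂ) •
      (Matrix.vecMulVec (φ a) (fun i => star (φ a i)) ⊗ₖ
       Matrix.vecMulVec (ψ a) (fun i => star (ψ a i)))

/-- Input state `Φ^{a₀}_{A₀Ã₀} ⊗ Φ^{b₀}_{B₀B̃₀}` for the Choi matrix, with index
grouping `(A₀ × B₀) × (Ã₀ × B̃₀)`. -/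
def choiInput (a₀ b₀ : ℕ) :
    Matrix ((Fin a₀ × Fin b₀) × (Fin a₀ × Fin b₀)) ((Fin a₀ × Fin b₀) × (Fin a₀ × Fin b₀)) ℂ :=
  Matrix.of fun p q =>
    maxEntangled a₀ a₀ a₀ (p.1.1, p.2.1) (q.1.1, q.2.1) *
    maxEntangled b₀ b₀ b₀ (p.1.2, p.2.2) (q.1.2, q.2.2)

/-- Normalized Choi matrix of a bipartite channel. -/
def choiBi {a₀ b₀ : ℕ} {ι₁ : Type} (E : MatMap (Fin a₀ × Fin b₀) ι₁) :
    Matrix (ι₁ × (Fin a₀ × Fin b₀)) (ι₁ × (Fin a₀ × Fin b₀)) ℂ :=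
  tensorIdT E (choiInput a₀ b₀)

/-- Normalized Choi matrix of a single-system channel. -/
def choi1 {d : ℕ} {ι₁ : Type} (N : MatMap (Fin d) ι₁) :
    Matrix (ι₁ × Fin d) (ι₁ × Fin d) ℂ :=
  tensorIdT N (maxEntangled d d d)

open Classical in
/-- Square root of a matrix (positive semidefinite case, junk value `0` otherwise). -/
def matSqrt {ι : Type} [Fintype ι] [DecidableEq ι] (A : Matrix ι ι ℂ) : Matrix ι ι ℂ :=
  if h : A.PosSemidef then posSemidefSqrt h else 0

/-- Fidelity `F(ρ,σ) = (tr √(√ρ σ √ρ))²`. -/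
def fidelity {ι : Type} [Fintype ι] [DecidableEq ι] (ρ σ : Matrix ι ι ℂ) : ℝ :=
  ((matSqrt (matSqrt ρ * σ * matSqrt ρ)).trace.re) ^ 2

section OpTasks

variable {α₀ β₀ α₁ β₁ α₀' β₀' α₁' β₁' : Type}
variable [Fintype α₀] [DecidableEq α₀] [Fintype β₀] [DecidableEq β₀]
variable [Fintype α₁] [DecidableEq α₁] [Fintype β₁] [DecidableEq β₁]
variable [Fintype α₀'] [DecidableEq α₀'] [Fintype β₀'] [DecidableEq β₀']
variable [Fintype α₁'] [DecidableEq α₁'] [Fintype β₁'] [DecidableEq β₁']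

/-- One-shot dynamic entanglement cost under SEPPSC. -/
def oneShotCostSEPP (ε : ℝ) (N : MatMap (α₀ × β₀) (α₁ × β₁)) : ℝ :=
  sInf { t : ℝ | ∃ (K : ℕ) (Θ : Superchannel (Fin K) (Fin K) (Fin K) (Fin K) α₀ β₀ α₁ β₁),
    IsSEPPSC Θ ∧
    (1/2) * diamondNorm (fun X => Θ.apply (swapChannel K) X - N X) ≤ ε ∧
    t = Real.logb 2 ((K : ℝ) ^ 2) }

/-- One-shot distillable dynamic entanglement under SEPPSC. -/
def oneShotDistillSEPP (ε : ℝ) (N : MatMap (α₀ × β₀) (α₁ × β₁)) : ℝ :=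
  sSup { t : ℝ | ∃ (K : ℕ) (Θ : Superchannel α₀ β₀ α₁ β₁ (Fin K) (Fin K) (Fin K) (Fin K)),
    IsSEPPSC Θ ∧
    (1/2) * diamondNorm (fun X => Θ.apply N X - swapChannel K X) ≤ ε ∧
    t = Real.logb 2 ((K : ℝ) ^ 2) }

/-- Hypothesis-testing relative entropy of dynamic entanglement. -/
def EH (ε : ℝ) (N : MatMap (α₀ × β₀) (α₁ × β₁)) : ℝ :=
  sSup { t : ℝ | ∃ (r : ℕ) (Ψ : Matrix ((α₀ × β₀) × Fin r) ((α₀ × β₀) × Fin r) ℂ)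
      (Q : Matrix ((α₁ × β₁) × Fin r) ((α₁ × β₁) × Fin r) ℂ),
    IsPureState Ψ ∧ Q.PosSemidef ∧ ((1 : Matrix ((α₁ × β₁) × Fin r) ((α₁ × β₁) × Fin r) ℂ) - Q).PosSemidef ∧
    1 - ε ≤ ((tensorIdT N Ψ * Q).trace).re ∧
    t = sInf { u : ℝ | ∃ M : MatMap (α₀ × β₀) (α₁ × β₁), IsSepChannel M ∧
        u = - Real.logb 2 (((tensorIdT M Ψ * Q).trace).re) } }

end OpTasks

/-- Reindexing a matrix map along equivalences of index types. -/
def reindexMap {ι₀ ι₁ κ₀ κ₁ : Type} (e₀ : ι₀ ≃ κ₀) (e₁ : ι₁ ≃ κ₁) (L : MatMap ι₀ ι₁) :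
    MatMap κ₀ κ₁ :=
  fun X => Matrix.reindex e₁ e₁ (L (Matrix.reindex e₀.symm e₀.symm X))

section Cat

variable {α₀ β₀ α₁ β₁ : Type}
variable [Fintype α₀] [DecidableEq α₀] [Fintype β₀] [DecidableEq β₀]
variable [Fintype α₁] [DecidableEq α₁] [Fintype β₁] [DecidableEq β₁]

/-- `N ⊗ F^L` as a bipartite channel for the cut `A C : B D` (catalyst `CD` of dimension `L×L`). -/
def tensorSwapCut (N : MatMap (α₀ × β₀) (α₁ × β₁)) (L : ℕ) :
    MatMap ((α₀ × Fin L) × (β₀ × Fin L)) ((α₁ × Fin L) × (β₁ × Fin L)) :=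
  reindexMap (Equiv.prodProdProdComm α₀ β₀ (Fin L) (Fin L))
             (Equiv.prodProdProdComm α₁ β₁ (Fin L) (Fin L))
             (tensorMap N (swapChannel L))

/-- One-shot catalytic dynamic entanglement cost under δ-SEPPSC. -/
def catalyticCost (δ ε : ℝ) (N : MatMap (α₀ × β₀) (α₁ × β₁)) : ℝ :=
  sInf { t : ℝ | ∃ (K L : ℕ)
      (Θ : Superchannel (Fin K × Fin L) (Fin K × Fin L) (Fin K × Fin L) (Fin K × Fin L)
            (α₀ × Fin L) (β₀ × Fin L) (α₁ × Fin L) (β₁ × Fin L)),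
    IsDeltaSEPPSC δ Θ ∧
    ∃ N' : MatMap (α₀ × β₀) (α₁ × β₁), IsChannel N' ∧
      (1/2) * diamondNorm (fun X => N' X - N X) ≤ ε ∧
      Θ.apply (tensorSwapCut (swapChannel K) L) = tensorSwapCut N' L ∧
      t = Real.logb 2 ((K : ℝ) ^ 2) }

end Cat

/-- Discrete Weyl operators on `ℂ^K`. -/
def weyl (K : ℕ) (k l : Fin K) : Matrix (Fin K) (Fin K) ℂ :=
  Matrix.of fun a s =>
    if (a : ℕ) = ((k : ℕ) + (s : ℕ)) % K
    then Complex.exp (2 * (Real.pi : ℂ) * Complex.I * ((s : ℕ) : ℂ) * ((l : ℕ) : ℂ) / (K : ℂ))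
    else 0

/-- `n`-fold tensor power of a matrix. -/
def matPow {ι : Type} [Fintype ι] (X : Matrix ι ι ℂ) (n : ℕ) :
    Matrix (Fin n → ι) (Fin n → ι) ℂ :=
  Matrix.of fun f g => ∏ t, X (f t) (g t)

/-- `n`-fold tensor power of a matrix map. -/
def powMap {ι₀ ι₁ : Type} [Fintype ι₀] [DecidableEq ι₀] (L : MatMap ι₀ ι₁) (n : ℕ) :
    MatMap (Fin n → ι₀) (Fin n → ι₁) :=
  fun X => Matrix.of fun f' g' => ∑ f : Fin n → ι₀, ∑ g : Fin n → ι₀,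
    X f g * ∏ t, L (Matrix.single (f t) (g t) 1) (f' t) (g' t)

section Pow

variable {α₀ β₀ α₁ β₁ : Type}
variable [Fintype α₀] [DecidableEq α₀] [Fintype β₀] [DecidableEq β₀]
variable [Fintype α₁] [DecidableEq α₁] [Fintype β₁] [DecidableEq β₁]

/-- `n`-fold tensor power of a bipartite channel, with cut `A^n : B^n`. -/
def powBi (N : MatMap (α₀ × β₀) (α₁ × β₁)) (n : ℕ) :
    MatMap ((Fin n → α₀) × (Fin n → β₀)) ((Fin n → α₁) × (Fin n → β₁)) :=
  reindexMap (Equiv.arrowProdEquivProdArrow (Fin n) (fun _ => α₀) (fun _ => β₀))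
             (Equiv.arrowProdEquivProdArrow (Fin n) (fun _ => α₁) (fun _ => β₁))
             (powMap N n)

/-- `φ^{⊗n}` of a bipartite input-reference state, regrouped as
`((A₀ⁿ × B₀ⁿ) × refⁿ)`. -/
def phiPow (n : ℕ)
    (φ : Matrix ((α₀ × β₀) × (α₀ × β₀)) ((α₀ × β₀) × (α₀ × β₀)) ℂ) :
    Matrix (((Fin n → α₀) × (Fin n → β₀)) × (Fin n → (α₀ × β₀)))
           (((Fin n → α₀) × (Fin n → β₀)) × (Fin n → (α₀ × β₀))) ℂ :=
  Matrix.reindex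
    ((Equiv.arrowProdEquivProdArrow (Fin n) (fun _ => α₀ × β₀) (fun _ => α₀ × β₀)).trans
      (Equiv.prodCongr (Equiv.arrowProdEquivProdArrow (Fin n) (fun _ => α₀) (fun _ => β₀)) (Equiv.refl _)))
    ((Equiv.arrowProdEquivProdArrow (Fin n) (fun _ => α₀ × β₀) (fun _ => α₀ × β₀)).trans
      (Equiv.prodCongr (Equiv.arrowProdEquivProdArrow (Fin n) (fun _ => α₀) (fun _ => β₀)) (Equiv.refl _)))
    (matPow φ n)

end Pow

open Classical in
/-- Base-2 matrix logarithm via the spectral decomposition (junk value `0` if not Hermitian). -/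
def matLogb2 {ι : Type} [Fintype ι] [DecidableEq ι] (A : Matrix ι ι ℂ) : Matrix ι ι ℂ :=
  if h : A.IsHermitian then
    (h.eigenvectorUnitary : Matrix ι ι ℂ) *
      Matrix.diagonal (fun i => ((Real.logb 2 (h.eigenvalues i) : ℝ) : ℂ)) *
      (star h.eigenvectorUnitary : Matrix ι ι ℂ)
  else 0

/-- Umegaki relative entropy `D(ρ‖σ) = tr ρ (log₂ ρ − log₂ σ)`. -/
def relEnt {ι : Type} [Fintype ι] [DecidableEq ι] (ρ σ : Matrix ι ι ℂ) : ℝ :=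
  ((ρ * (matLogb2 ρ - matLogb2 σ)).trace).re

section Liberal

variable {α₀ β₀ α₁ β₁ : Type}
variable [Fintype α₀] [DecidableEq α₀] [Fintype β₀] [DecidableEq β₀]
variable [Fintype α₁] [DecidableEq α₁] [Fintype β₁] [DecidableEq β₁]

/-- Zero-error one-shot dynamic entanglement cost under SEPPSC. -/
def zeroCostSEPP (N : MatMap (α₀ × β₀) (α₁ × β₁)) : ℝ :=
  sInf { t : ℝ | ∃ (K : ℕ) (Θ : Superchannel (Fin K) (Fin K) (Fin K) (Fin K) α₀ β₀ α₁ β₁),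
    IsSEPPSC Θ ∧ Θ.apply (swapChannel K) = N ∧ t = Real.logb 2 ((K : ℝ) ^ 2) }

/-- Liberal (asymptotic) dynamic entanglement cost under SEPPSC. -/
def liberalCost (N : MatMap (α₀ × β₀) (α₁ × β₁)) : ℝ :=
  limUnder (nhdsWithin (0 : ℝ) (Set.Ioi 0)) (fun ε : ℝ =>
    liminf (fun n : ℕ =>
      (1 / (n : ℝ)) * sSup { t : ℝ |
        ∃ φ : Matrix ((α₀ × β₀) × (α₀ × β₀)) ((α₀ × β₀) × (α₀ × β₀)) ℂ, IsState φ ∧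
          t = sInf { u : ℝ |
            ∃ N'' : MatMap ((Fin n → α₀) × (Fin n → β₀)) ((Fin n → α₁) × (Fin n → β₁)),
              IsChannel N'' ∧
              (1/2) * traceNorm
                (tensorIdT N'' (phiPow n φ) - tensorIdT (powBi N n) (phiPow n φ)) ≤ ε ∧
              u = zeroCostSEPP N'' } }) atTop)

/-- Liberal regularized relative entropy with respect to separable channels. -/
def liberalRelEnt (N : MatMap (α₀ × β₀) (α₁ × β₁)) : ℝ :=
  limUnder atTop (fun n : ℕ =>
    (1 / (n : ℝ)) * sSup { t : ℝ |
      ∃ φ : Matrix ((α₀ × β₀) × (α₀ × β₀)) ((α₀ × β₀) × (α₀ × β₀)) ℂ, IsState φ ∧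
        t = sInf { u : ℝ | ∃ M : MatMap (α₀ × β₀) (α₁ × β₁), IsSepChannel M ∧
          u = relEnt (tensorIdT (powBi N n) (phiPow n φ))
                     (tensorIdT (powBi M n) (phiPow n φ)) } })

end Liberal

/-!
Write `E = ∑ₖ Aₖ ⊗ Bₖ` and let `Cₖ`, `Dₖ` be the unnormalized Choi matrices of `Aₖ`, `Bₖ`, which
are positive semidefinite. Since `J^F = K⁻² |w⟩⟨w|` with `w` the indicator of the pairs
`((a, b), (b, a))`, the overlap equals `K⁻⁴ ∑ₖ ∑ₓ ∑ᵧ Cₖ(x, y) Dₖ(x̄, ȳ)`, where `x̄` is `x` swapped.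
Each inner double sum is `tr (Cₖ D̃ₖᵀ)` for a positive semidefinite `D̃ₖ`, hence at most
`tr Cₖ · tr Dₖ`, and trace preservation of `E` gives `∑ₖ tr Cₖ · tr Dₖ = K²`.
-/

section TraceInequality

variable {m n : Type} [Fintype m] [Fintype n]

open scoped MatrixOrder Matrix.Norms.L2Operator in
lemma _root_.Matrix.PosSemidef.exists_eq_conjTranspose_mul_self {A : Matrix n n ℂ}
    (hA : A.PosSemidef) : ∃ B : Matrix n n ℂ, A = Bᴴ * B := by
  classical
  exact CStarAlgebra.nonneg_iff_eq_star_mul_self.mp hA.nonneg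

open scoped Matrix.Norms.Frobenius in
lemma _root_.Matrix.trace_conjTranspose_mul_self_eq_frobenius_norm_sq (A : Matrix m n ℂ) :
    (Aᴴ * A).trace = ((‖A‖ ^ 2 : ℝ) : ℂ) := by
  rw [frobenius_norm_def, ← Real.rpow_natCast, ← Real.rpow_mul (by positivity), Finset.sum_comm]
  norm_num [Matrix.trace, Matrix.mul_apply, Complex.conj_mul']

open scoped Matrix.Norms.Frobenius in
/-- Writing `P = XᴴX` and `Q = YᴴY`, `tr (P Q) = ‖Y Xᴴ‖²` in the Frobenius norm, which is
submultiplicative. -/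
lemma _root_.Matrix.PosSemidef.trace_mul_le_trace_mul_trace {P Q : Matrix n n ℂ}
    (hP : P.PosSemidef) (hQ : Q.PosSemidef) : (P * Q).trace ≤ P.trace * Q.trace := by
  obtain ⟨X, rfl⟩ := hP.exists_eq_conjTranspose_mul_self
  obtain ⟨Y, rfl⟩ := hQ.exists_eq_conjTranspose_mul_self
  have hcycle : (Xᴴ * X * (Yᴴ * Y)).trace = ((Y * Xᴴ)ᴴ * (Y * Xᴴ)).trace := by
    rw [Matrix.conjTranspose_mul, Matrix.conjTranspose_conjTranspose, Matrix.mul_assoc,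
      Matrix.trace_mul_comm, Matrix.mul_assoc, Matrix.mul_assoc, Matrix.mul_assoc]
  simp only [hcycle, Matrix.trace_conjTranspose_mul_self_eq_frobenius_norm_sq, ← Complex.ofReal_mul,
    Complex.real_le_real, ← mul_pow]
  gcongr
  calc ‖Y * Xᴴ‖ ≤ ‖Y‖ * ‖Xᴴ‖ := Matrix.frobenius_norm_mul Y Xᴴ
    _ = ‖X‖ * ‖Y‖ := by rw [Matrix.frobenius_norm_conjTranspose, mul_comm]

lemma _root_.Matrix.PosSemidef.sum_mul_apply_le_trace_mul_trace {P Q : Matrix n n ℂ}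
    (hP : P.PosSemidef) (hQ : Q.PosSemidef) : ∑ x, ∑ y, P x y * Q x y ≤ P.trace * Q.trace := by
  simpa [Matrix.trace, Matrix.mul_apply] using hP.trace_mul_le_trace_mul_trace hQ.transpose

end TraceInequality

/-- The unnormalized Choi matrix `∑ᵢⱼ L(|i⟩⟨j|) ⊗ |i⟩⟨j|`. -/
def choiMatrix {ι₀ ι₁ : Type} [DecidableEq ι₀] (L : MatMap ι₀ ι₁) :
    Matrix (ι₁ × ι₀) (ι₁ × ι₀) ℂ :=
  Matrix.of fun p q => L (Matrix.single p.2 q.2 1) p.1 q.1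

lemma choiMatrix_posSemidef {d : ℕ} {ι₁ : Type} [Fintype ι₁] {L : MatMap (Fin d) ι₁}
    (hL : IsCompletelyPositive L) : (choiMatrix L).PosSemidef := by
  let ω : Fin d × Fin d → ℂ := fun p => if p.1 = p.2 then 1 else 0
  have h : choiMatrix L = tensorIdT L (Matrix.vecMulVec ω (star ω)) := by
    ext p q
    simp only [choiMatrix, tensorIdT, Matrix.of_apply]
    congr 2
    ext i j
    simp only [ω, Matrix.of_apply, Matrix.vecMulVec_apply, Matrix.single_apply, Pi.star_apply,
      apply_ite star, star_one, star_zero, mul_ite, mul_one, mul_zero]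
    grind
  rw [h]
  exact hL d _ (Matrix.posSemidef_vecMulVec_self_star ω)

lemma trace_choiMatrix {ι₀ ι₁ : Type} [Fintype ι₀] [DecidableEq ι₀] [Fintype ι₁]
    (L : MatMap ι₀ ι₁) : (choiMatrix L).trace = ∑ i, (L (Matrix.single i i 1)).trace := by
  simp only [Matrix.trace, Matrix.diag, choiMatrix, Matrix.of_apply, Fintype.sum_prod_type]
  exact Finset.sum_comm

lemma tensorMap_single {α₀ α₁ β₀ β₁ : Type} [Fintype α₀] [DecidableEq α₀]
    [Fintype β₀] [DecidableEq β₀] (LA : MatMap α₀ α₁) (LB : MatMap β₀ β₁)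
    (s r : α₀ × β₀) (c : ℂ) :
    tensorMap LA LB (Matrix.single s r c)
      = c • (LA (Matrix.single s.1 r.1 1) ⊗ₖ LB (Matrix.single s.2 r.2 1)) := by
  simp [tensorMap, Matrix.single_apply, Prod.ext_iff, ite_and]

lemma sum_trace_choiMatrix_mul_trace_choiMatrix {α₀ α₁ β₀ β₁ : Type}
    [Fintype α₀] [DecidableEq α₀] [Fintype β₀] [DecidableEq β₀] [Fintype α₁] [Fintype β₁]
    {E : MatMap (α₀ × β₀) (α₁ × β₁)} (hTP : IsTracePreserving E) {n : ℕ}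
    {LA : Fin n → MatMap α₀ α₁} {LB : Fin n → MatMap β₀ β₁}
    (hE : ∀ X, E X = ∑ k, tensorMap (LA k) (LB k) X) :
    ∑ k, (choiMatrix (LA k)).trace * (choiMatrix (LB k)).trace
      = Fintype.card α₀ * Fintype.card β₀ := by
  have hunit : ∀ i j, ∑ k, (LA k (Matrix.single i i 1)).trace * (LB k (Matrix.single j j 1)).trace
      = 1 := fun i j => by
    simpa [hE, Matrix.trace_sum, tensorMap_single, Matrix.trace_kronecker] using
      hTP (Matrix.single (i, j) (i, j) 1)
  simp only [trace_choiMatrix, Finset.sum_mul_sum]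
  rw [Finset.sum_comm]
  simp_rw [Finset.sum_comm (γ := Fin n), hunit]
  simp

lemma choiInput_block {a₀ b₀ : ℕ} (r s : Fin a₀ × Fin b₀) :
    (Matrix.of fun i j => choiInput a₀ b₀ (i, r) (j, s))
      = Matrix.single r s ((a₀ * b₀ : ℂ)⁻¹) := by
  ext i j
  simp only [choiInput, maxEntangled, Matrix.of_apply, Matrix.single_apply, Fin.is_lt,
    and_true, Fin.val_inj, Prod.ext_iff, mul_inv, one_div]
  grind

lemma choiBi_apply {a₀ b₀ : ℕ} {ι₁ : Type} (L : MatMap (Fin a₀ × Fin b₀) ι₁)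
    (p q : ι₁ × (Fin a₀ × Fin b₀)) :
    choiBi L p q = L (Matrix.single p.2 q.2 ((a₀ * b₀ : ℂ)⁻¹)) p.1 q.1 := by
  rw [choiBi, tensorIdT, Matrix.of_apply, choiInput_block]

lemma choiBi_apply_of_eq_sum_tensorMap {a₀ b₀ n : ℕ} {α₁ β₁ : Type}
    {E : MatMap (Fin a₀ × Fin b₀) (α₁ × β₁)}
    {LA : Fin n → MatMap (Fin a₀) α₁} {LB : Fin n → MatMap (Fin b₀) β₁}
    (hE : ∀ X, E X = ∑ k, tensorMap (LA k) (LB k) X) (p q : (α₁ × β₁) × (Fin a₀ × Fin b₀)) :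
    choiBi E p q = (a₀ * b₀ : ℂ)⁻¹ * ∑ k,
      choiMatrix (LA k) (p.1.1, p.2.1) (q.1.1, q.2.1) *
        choiMatrix (LB k) (p.1.2, p.2.2) (q.1.2, q.2.2) := by
  simp [choiBi_apply, hE, Matrix.sum_apply, tensorMap_single, choiMatrix, Finset.mul_sum]

lemma swapChannel_apply (K : ℕ) (X : Matrix (Fin K × Fin K) (Fin K × Fin K) ℂ)
    (p q : Fin K × Fin K) : swapChannel K X p q = X p.swap q.swap := by
  have hF : ∀ p q, swapMatrix K p q = if q = p.swap then 1 else 0 := fun p q => by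
    simp only [swapMatrix, Matrix.of_apply, Prod.ext_iff, Prod.fst_swap, Prod.snd_swap]
    grind
  simp [swapChannel, Matrix.mul_apply, Matrix.conjTranspose_apply, hF, apply_ite star]

lemma trace_choiBi_swapChannel_mul (K : ℕ)
    (M : Matrix ((Fin K × Fin K) × (Fin K × Fin K)) ((Fin K × Fin K) × (Fin K × Fin K)) ℂ) :
    (choiBi (swapChannel K) * M).trace
      = (K * K : ℂ)⁻¹ * ∑ x, ∑ y, M (x, x.swap) (y, y.swap) := by
  have hF : ∀ p q, choiBi (swapChannel K) p q
      = if p.2 = p.1.swap then (if q.2 = q.1.swap then (K * K : ℂ)⁻¹ else 0) else 0 := by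
    intro p q
    simp only [choiBi_apply, swapChannel_apply, Matrix.single_apply, ite_and]
  simp only [Matrix.trace, Matrix.diag, Matrix.mul_apply, hF, ite_mul, zero_mul,
    Fintype.sum_prod_type (α₁ := Fin K × Fin K) (α₂ := Fin K × Fin K),
    Finset.sum_ite_eq', Finset.mem_univ, if_true, Finset.sum_ite_irrel, Finset.sum_const_zero,
    Finset.mul_sum]
  exact Finset.sum_comm

lemma trace_choiBi_swapChannel_mul_choiBi {K n : ℕ} {E : MatMap (Fin K × Fin K) (Fin K × Fin K)}
    {LA LB : Fin n → MatMap (Fin K) (Fin K)}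
    (hE : ∀ X, E X = ∑ k, tensorMap (LA k) (LB k) X) :
    (choiBi (swapChannel K) * choiBi E).trace = (K * K : ℂ)⁻¹ ^ 2 *
      ∑ k, ∑ x, ∑ y, choiMatrix (LA k) x y *
        (choiMatrix (LB k)).submatrix Prod.swap Prod.swap x y := by
  simp only [trace_choiBi_swapChannel_mul, choiBi_apply_of_eq_sum_tensorMap hE,
    Prod.fst_swap, Prod.snd_swap, Prod.mk.eta, Matrix.submatrix_apply, Finset.mul_sum, sq,
    mul_assoc]
  simp_rw [Finset.sum_comm (α := Fin n)]
  rfl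

section Statements


variable {α₀ β₀ α₁ β₁ α₀' β₀' α₁' β₁' : Type}
variable [Fintype α₀] [DecidableEq α₀] [Fintype β₀] [DecidableEq β₀]
variable [Fintype α₁] [DecidableEq α₁] [Fintype β₁] [DecidableEq β₁]
variable [Fintype α₀'] [DecidableEq α₀'] [Fintype β₀'] [DecidableEq β₀']
variable [Fintype α₁'] [DecidableEq α₁'] [Fintype β₁'] [DecidableEq β₁']

theorem stmt15_general (K : ℕ)
    (E : MatMap (Fin K × Fin K) (Fin K × Fin K)) (hE : IsSepChannel E) :
    ((choiBi (swapChannel K) * choiBi E).trace).re ≤ 1 / (K : ℝ) ^ 2 := by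
  obtain ⟨⟨-, -, hTP⟩, n, LA, LB, hCP, hE⟩ := hE
  let D k := (choiMatrix (LB k)).submatrix Prod.swap Prod.swap
  have hD (k) : (D k).PosSemidef := (choiMatrix_posSemidef (hCP k).2.2.2).submatrix _
  have htrD (k) : (D k).trace = (choiMatrix (LB k)).trace :=
    (Equiv.prodComm _ _).sum_comp fun x => choiMatrix (LB k) x x
  have hinv (x : ℂ) : x⁻¹ ^ 2 * x = x⁻¹ :=
    calc x⁻¹ ^ 2 * x = x⁻¹ * x⁻¹⁻¹ * x⁻¹ := by rw [inv_inv]; ring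
      _ = x⁻¹ := mul_inv_mul_cancel _
  have key : (choiBi (swapChannel K) * choiBi E).trace ≤ ((1 / (K : ℝ) ^ 2 : ℝ) : ℂ) :=
    calc (choiBi (swapChannel K) * choiBi E).trace
        = (K * K : ℂ)⁻¹ ^ 2 * ∑ k, ∑ x, ∑ y, choiMatrix (LA k) x y * D k x y :=
          trace_choiBi_swapChannel_mul_choiBi hE
      _ ≤ (K * K : ℂ)⁻¹ ^ 2 * ∑ k, (choiMatrix (LA k)).trace * (D k).trace := by
          gcongr with k
          exact (choiMatrix_posSemidef (hCP k).2.1).sum_mul_apply_le_trace_mul_trace (hD k)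
      _ = (K * K : ℂ)⁻¹ ^ 2 * (K * K) := by
          simp only [htrD, sum_trace_choiMatrix_mul_trace_choiMatrix hTP hE, Fintype.card_fin]
      _ = ((1 / (K : ℝ) ^ 2 : ℝ) : ℂ) := by
          push_cast
          rw [hinv, one_div, sq]
  exact (Complex.re_le_re key).trans_eq (Complex.ofReal_re _)

theorem stmt15 (K : ℕ) (hK : 1 ≤ K)
    (E : MatMap (Fin K × Fin K) (Fin K × Fin K)) (hE : IsSepChannel E) :
    ((choiBi (swapChannel K) * choiBi E).trace).re ≤ 1 / (K : ℝ) ^ 2 :=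
  stmt15_general K E hE

end Statements

end DynEnt
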